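/- arXiv:2010.16315 — 2 statements merged into one kernel-verified Lean document; each statement's English description precedes it below -/
import Mathlib

section
/- If G is a connected graph of order n with γ(G) = ⌈n/(Δ(G)+1)⌉, then th_pd×(G) = ⌈n/(Δ(G)+1)⌉. -/
/-!
Every power dominating set `S` has `n ≤ |S| · pt_pd(G;S) · (Δ + 1)`. The domination step observes
at most `|S|(Δ + 1)` vertices; afterwards a vertex forces at most one vertex over the whole process,
so the vertices forced by the end of round `k + 2` inject, via their forcers, into the set observed
after round `k + 1`, and each round adds at most `|N[S]|` vertices. This gives
`⌈n/(Δ + 1)⌉ ≤ th_pd×(G)`, while a minimum dominating set, of propagation time `1`, gives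
`th_pd×(G) ≤ γ(G)`.
-/

open SimpleGraph Set

variable {V : Type*} {W : Type*}

/-- The closed neighborhood of a set `S`. -/
def closedNbhdSet (G : SimpleGraph V) (S : Set V) : Set V :=
  S ∪ {w | ∃ u ∈ S, G.Adj u w}

/-- One round of the zero forcing propagation step. -/
def pdStep (G : SimpleGraph V) (A : Set V) : Set V :=
  A ∪ {w | ∃ u ∈ A, G.neighborSet u \ A = {w}}

/-- `obs G S k` is the set `P^[k](S)` of vertices observed after round `k`. -/
def obs (G : SimpleGraph V) (S : Set V) : ℕ → Set V
  | 0 => S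
  | 1 => closedNbhdSet G S
  | (n + 2) => pdStep G (obs G S (n + 1))

/-- `S` is a power dominating set. -/
def IsPDS (G : SimpleGraph V) (S : Set V) : Prop :=
  ∃ t, obs G S t = Set.univ

/-- The power propagation time `pt_pd(G;S)`: least positive `t` with `P^[t](S) = V(G)`. -/
noncomputable def ptpd (G : SimpleGraph V) (S : Set V) : ℕ :=
  sInf {t | 1 ≤ t ∧ obs G S t = Set.univ}

/-- `S` is a dominating set. -/
def IsDomSet (G : SimpleGraph V) (S : Set V) : Prop :=
  closedNbhdSet G S = Set.univ

/-- The domination number `γ(G)`. -/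
noncomputable def gamma (G : SimpleGraph V) : ℕ :=
  sInf {k | ∃ S : Set V, IsDomSet G S ∧ S.ncard = k}

/-- The power domination number `γ_P(G)`. -/
noncomputable def gammaP (G : SimpleGraph V) : ℕ :=
  sInf {k | ∃ S : Set V, IsPDS G S ∧ S.ncard = k}

/-- The product power throttling number `th_pd^×(G)`. -/
noncomputable def thpd (G : SimpleGraph V) : ℕ :=
  sInf {m | ∃ S : Set V, IsPDS G S ∧ m = S.ncard * ptpd G S}

/-- The power propagation time of `G`: minimum over minimum power dominating sets. -/
noncomputable def ptG (G : SimpleGraph V) : ℕ :=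
  sInf {t | ∃ S : Set V, IsPDS G S ∧ S.ncard = gammaP G ∧ t = ptpd G S}

/-- `newObs G S k` is `P^(k)(S)`, the set of vertices first observed in round `k`. -/
def newObs (G : SimpleGraph V) (S : Set V) : ℕ → Set V
  | 0 => S
  | (k + 1) => obs G S (k + 1) \ obs G S k

/-- `rd G S v` is the round in which `v` is first observed. -/
noncomputable def rd (G : SimpleGraph V) (S : Set V) (v : V) : ℕ :=
  sInf {k | v ∈ obs G S k}

section Propagation

variable {G : SimpleGraph V} {S : Set V}

lemma obs_mono : Monotone (obs G S) := by
  refine monotone_nat_of_le_succ fun k => ?_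
  match k with
  | 0 => exact subset_union_left
  | _ + 1 => exact subset_union_left

-- `u` forces `v` in round `k + 2`, the first round after the domination step being `2`.
def Forces (G : SimpleGraph V) (S : Set V) (u v : V) : Prop :=
  ∃ k, G.neighborSet u \ obs G S (k + 1) = {v}

lemma eq_of_diff_eq_singleton {A s t : Set V} {v w : V} (hst : s ⊆ t)
    (hs : A \ s = {v}) (ht : A \ t = {w}) : v = w := by
  have : ({w} : Set V) ⊆ {v} := ht ▸ hs ▸ sdiff_subset_sdiff_right hst
  exact (singleton_subset_singleton.mp this).symm

lemma Forces.unique {u v w : V} (hv : Forces G S u v) (hw : Forces G S u w) : v = w := by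
  obtain ⟨k, hk⟩ := hv
  obtain ⟨l, hl⟩ := hw
  rcases le_total k l with hkl | hlk
  · exact eq_of_diff_eq_singleton (obs_mono (by omega)) hk hl
  · exact (eq_of_diff_eq_singleton (obs_mono (by omega)) hl hk).symm

lemma exists_forces_of_mem_obs {k : ℕ} {v : V} (hv : v ∈ obs G S (k + 2)) (hv₁ : v ∉ obs G S 1) :
    ∃ u ∈ obs G S (k + 1), Forces G S u v := by
  induction k with
  | zero =>
    rcases hv with hv | ⟨u, hu, huv⟩
    · exact absurd hv hv₁
    · exact ⟨u, hu, 0, huv⟩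
  | succ k ih =>
    rcases hv with hv | ⟨u, hu, huv⟩
    · obtain ⟨u, hu, huv⟩ := ih hv
      exact ⟨u, obs_mono (by omega) hu, huv⟩
    · exact ⟨u, hu, k + 1, huv⟩

variable [Finite V]

lemma ncard_obs_add_two_le (k : ℕ) :
    (obs G S (k + 2)).ncard ≤ (obs G S (k + 1)).ncard + (obs G S 1).ncard := by
  have hforcer : ∀ v ∈ obs G S (k + 2) \ obs G S 1, ∃ u ∈ obs G S (k + 1), Forces G S u v :=
    fun v hv => exists_forces_of_mem_obs hv.1 hv.2
  choose! f hf_mem hf_forces using hforcer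
  have hforced : (obs G S (k + 2) \ obs G S 1).ncard ≤ (obs G S (k + 1)).ncard :=
    ncard_le_ncard_of_injOn f hf_mem fun v hv w hw hvw =>
      (hf_forces v hv).unique (hvw ▸ hf_forces w hw)
  calc (obs G S (k + 2)).ncard
      ≤ (obs G S 1 ∪ obs G S (k + 2) \ obs G S 1).ncard := ncard_le_ncard (by simp)
    _ ≤ (obs G S 1).ncard + (obs G S (k + 2) \ obs G S 1).ncard := ncard_union_le _ _
    _ ≤ (obs G S (k + 1)).ncard + (obs G S 1).ncard := by omega

lemma ncard_obs_le (t : ℕ) : (obs G S (t + 1)).ncard ≤ (t + 1) * (obs G S 1).ncard := by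
  induction t with
  | zero => simp
  | succ t ih =>
    calc (obs G S (t + 2)).ncard ≤ (obs G S (t + 1)).ncard + (obs G S 1).ncard :=
          ncard_obs_add_two_le t
      _ ≤ (t + 2) * (obs G S 1).ncard := by nlinarith

end Propagation

section Throttling

variable {G : SimpleGraph V} {S : Set V}

lemma ncard_obs_one_le [Fintype V] [DecidableRel G.Adj] :
    (obs G S 1).ncard ≤ S.ncard * (G.maxDegree + 1) := by
  classical
  let N : Finset V := S.toFinset.biUnion fun u => insert u (G.neighborFinset u)
  have hsub : obs G S 1 ⊆ N := by
    rintro w (hw | ⟨u, hu, huw⟩)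
    · simpa [N] using ⟨w, hw, Or.inl rfl⟩
    · simpa [N] using ⟨u, hu, Or.inr huw⟩
  calc (obs G S 1).ncard ≤ N.card := by simpa using ncard_le_ncard hsub
    _ ≤ S.toFinset.card * (G.maxDegree + 1) :=
        Finset.card_biUnion_le_card_mul _ _ _ fun u _ =>
          (Finset.card_insert_le _ _).trans (by simpa using G.degree_le_maxDegree u)
    _ = S.ncard * (G.maxDegree + 1) := by rw [ncard_eq_toFinset_card']

lemma IsPDS.ptpd_spec (hS : IsPDS G S) : 1 ≤ ptpd G S ∧ obs G S (ptpd G S) = univ := by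
  obtain ⟨t, ht⟩ := hS
  refine Nat.sInf_mem (s := {t | 1 ≤ t ∧ obs G S t = univ})
    ⟨max t 1, le_max_right t 1, eq_univ_of_univ_subset ?_⟩
  exact ht ▸ obs_mono (le_max_left t 1)

lemma IsDomSet.isPDS (hS : IsDomSet G S) : IsPDS G S := ⟨1, hS⟩

lemma IsDomSet.ptpd_eq_one (hS : IsDomSet G S) : ptpd G S = 1 :=
  le_antisymm (Nat.sInf_le ⟨le_rfl, hS⟩) hS.isPDS.ptpd_spec.1

lemma IsPDS.card_le [Fintype V] [DecidableRel G.Adj] (hS : IsPDS G S) :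
    Fintype.card V ≤ S.ncard * ptpd G S * (G.maxDegree + 1) := by
  obtain ⟨hpos, huniv⟩ := hS.ptpd_spec
  obtain ⟨t, ht⟩ : ∃ t, ptpd G S = t + 1 := ⟨ptpd G S - 1, by omega⟩
  calc Fintype.card V = (obs G S (t + 1)).ncard := by
        rw [← ht, huniv, ncard_univ, Nat.card_eq_fintype_card]
    _ ≤ (t + 1) * (obs G S 1).ncard := ncard_obs_le t
    _ ≤ (t + 1) * (S.ncard * (G.maxDegree + 1)) := Nat.mul_le_mul_left _ ncard_obs_one_le
    _ = S.ncard * ptpd G S * (G.maxDegree + 1) := by rw [ht]; ring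

variable (G)

lemma thpd_le_gamma : thpd G ≤ gamma G := by
  have hdom : IsDomSet G univ := eq_univ_of_univ_subset subset_union_left
  obtain ⟨S, hS, hcard⟩ :=
    Nat.sInf_mem (s := {k | ∃ S : Set V, IsDomSet G S ∧ S.ncard = k}) ⟨_, univ, hdom, rfl⟩
  exact Nat.sInf_le ⟨S, hS.isPDS, by rw [hS.ptpd_eq_one, mul_one, hcard, gamma]⟩

lemma card_le_thpd_mul [Fintype V] [DecidableRel G.Adj] :
    Fintype.card V ≤ thpd G * (G.maxDegree + 1) := by
  have huniv : IsPDS G univ := ⟨0, rfl⟩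
  obtain ⟨S, hS, hth⟩ :=
    Nat.sInf_mem (s := {m | ∃ S : Set V, IsPDS G S ∧ m = S.ncard * ptpd G S}) ⟨_, univ, huniv, rfl⟩
  rw [thpd, hth]
  exact hS.card_le

end Throttling

theorem stmt5_general [Fintype V] (G : SimpleGraph V) [DecidableRel G.Adj]
    (h : (gamma G : ℤ) = ⌈(Fintype.card V : ℚ) / (G.maxDegree + 1)⌉) :
    (thpd G : ℤ) = ⌈(Fintype.card V : ℚ) / (G.maxDegree + 1)⌉ := by
  refine le_antisymm ?_ ?_
  · rw [← h]
    exact_mod_cast thpd_le_gamma G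
  · rw [Int.ceil_le, div_le_iff₀ (by positivity)]
    exact_mod_cast card_le_thpd_mul G

theorem stmt5 [Fintype V] (G : SimpleGraph V) [DecidableRel G.Adj] (hG : G.Connected)
    (h : (gamma G : ℤ) = ⌈(Fintype.card V : ℚ) / (G.maxDegree + 1)⌉) :
    (thpd G : ℤ) = ⌈(Fintype.card V : ℚ) / (G.maxDegree + 1)⌉ :=
  stmt5_general G h
end

section
/- If G is a connected unit interval graph with power dominating set S, then for each k ≥ 1, every vertex in P^(k)(S) is adjacent to a vertex in P^(k−1)(S). -/
open SimpleGraph Set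

variable {V : Type*} {W : Type*}

section Aux

lemma obs_subset_succ (G : SimpleGraph V) (S : Set V) : ∀ m, obs G S m ⊆ obs G S (m+1)
  | 0 => Set.subset_union_left
  | 1 => Set.subset_union_left
  | (_+2) => Set.subset_union_left

lemma obs_mono_s18 (G : SimpleGraph V) (S : Set V) {i j : ℕ} (h : i ≤ j) :
    obs G S i ⊆ obs G S j := by
  induction j with
  | zero => rw [Nat.le_zero.mp h]
  | succ n ih =>
    rcases Nat.lt_succ_iff_lt_or_eq.mp (Nat.lt_succ_of_le h) with h' | h'
    · exact (ih (Nat.lt_succ_iff.mp h')).trans (obs_subset_succ G S n)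
    · rw [h']

lemma key (G : SimpleGraph V) (ℓ : V → ℝ) (hinj : Function.Injective ℓ)
    (hrep : ∀ u v, G.Adj u v ↔ u ≠ v ∧ |ℓ u - ℓ v| ≤ 1)
    (S : Set V) (m : ℕ) (u v : V) (hu : u ∈ obs G S m)
    (hv : v ∉ obs G S (m+1)) (huv : G.Adj u v) (hlt : ℓ u < ℓ v) :
    ∃ x, x ∉ obs G S m ∧ G.Adj u x ∧ G.Adj x v := by
  have hvm : v ∉ obs G S m := fun h => hv (obs_subset_succ G S m h)
  -- u is not in S
  have huS : u ∉ S := by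
    intro h
    exact hv (obs_mono_s18 G S (Nat.one_le_iff_ne_zero.mpr (Nat.succ_ne_zero m))
      (Set.mem_union_right _ ⟨u, h, huv⟩))
  -- m ≥ 1
  obtain ⟨m', rfl⟩ : ∃ m', m = m' + 1 := by
    cases m with
    | zero => exact absurd hu huS
    | succ m' => exact ⟨m', rfl⟩
  -- distance bounds for u, v
  have huv1 : |ℓ u - ℓ v| ≤ 1 := ((hrep u v).mp huv).2
  have huv1' : ℓ v - ℓ u ≤ 1 := by
    rcases abs_le.mp huv1 with ⟨h1, _⟩; linarith
  -- the vertex y from which u was first observed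
  obtain ⟨y, hym, hyu, hyall⟩ :
      ∃ y, y ∈ obs G S (m' + 1) ∧ G.Adj y u ∧
        (∀ z, G.Adj y z → z ≠ u → z ∈ obs G S (m' + 1)) := by
    obtain ⟨j, hjmem, hjle, hjmin⟩ :
        ∃ j, u ∈ obs G S j ∧ j ≤ m' + 1 ∧ ∀ i, i < j → u ∉ obs G S i := by
      have hne : {i | u ∈ obs G S i}.Nonempty := ⟨m' + 1, hu⟩
      refine ⟨sInf {i | u ∈ obs G S i}, Nat.sInf_mem hne,
        Nat.sInf_le hu, fun i hi hmem => ?_⟩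
      have hmem' : i ∈ {i | u ∈ obs G S i} := hmem
      exact absurd (Nat.sInf_le hmem') (by omega)
    match j, hjmem, hjle, hjmin with
    | 0, hjmem, _, _ => exact absurd hjmem huS
    | 1, hjmem, hjle, _ =>
      rcases hjmem with h | ⟨s, hsS, hsu⟩
      · exact absurd h huS
      · refine ⟨s, obs_mono_s18 G S (Nat.zero_le _) hsS, hsu, fun z hz _ => ?_⟩
        exact obs_mono_s18 G S hjle (Set.mem_union_right _ ⟨s, hsS, hz⟩)
    | (j'' + 2), hjmem, hjle, hjmin =>
      have hnot : u ∉ obs G S (j'' + 1) := hjmin (j'' + 1) (by omega)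
      rcases hjmem with h | ⟨y, hyO, hyset⟩
      · exact absurd h hnot
      · have hyu : G.Adj y u := by
          have : u ∈ G.neighborSet y \ obs G S (j'' + 1) := by
            rw [hyset]; exact rfl
          exact this.1
        refine ⟨y, obs_mono_s18 G S (by omega) hyO, hyu, fun z hz hzu => ?_⟩
        by_contra hzm
        have hz' : z ∈ G.neighborSet y \ obs G S (j'' + 1) :=
          ⟨hz, fun h => hzm (obs_mono_s18 G S (by omega) h)⟩
        rw [hyset] at hz'
        exact hzu hz'
  -- y is to the left of u
  have hyv : ¬ G.Adj y v := by
    intro h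
    exact hvm (hyall v h (fun h' => ((hrep u v).mp huv).1 h'.symm))
  have hyu1 : |ℓ y - ℓ u| ≤ 1 := ((hrep y u).mp hyu).2
  have hynev : y ≠ v := fun h => hvm (h ▸ hym)
  have hylt : ℓ y < ℓ u := by
    rcases lt_or_gt_of_ne (fun h => ((hrep y u).mp hyu).1 (hinj h)) with h | h
    · exact h
    · exfalso
      apply hyv
      rw [hrep]
      refine ⟨hynev, ?_⟩
      rw [abs_le]
      rcases abs_le.mp hyu1 with ⟨h1, h2⟩
      constructor <;> linarith
  -- u has an unobserved neighbor besides v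
  have hvmemN : v ∈ G.neighborSet u \ obs G S (m' + 1) := ⟨huv, hvm⟩
  have hsetne : G.neighborSet u \ obs G S (m' + 1) ≠ {v} := by
    intro h
    exact hv (Set.mem_union_right _ ⟨u, hu, h⟩)
  obtain ⟨x, hxmem, hxv⟩ :
      ∃ x ∈ G.neighborSet u \ obs G S (m' + 1), x ≠ v := by
    by_contra hc
    push_neg at hc
    exact hsetne (Set.eq_singleton_iff_unique_mem.mpr ⟨hvmemN, hc⟩)
  obtain ⟨hxadj, hxm⟩ := hxmem
  have hxadj : G.Adj u x := hxadj
  have hxu1 : |ℓ u - ℓ x| ≤ 1 := ((hrep u x).mp hxadj).2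
  have hxneu : x ≠ u := fun h => ((hrep u x).mp hxadj).1 h.symm
  rcases abs_le.mp hyu1 with ⟨hy1, hy2⟩
  rcases abs_le.mp hxu1 with ⟨hx1, hx2⟩
  rcases lt_or_gt_of_ne (fun h => hxneu (hinj h.symm)) with h | h
  · -- x to the right of u : x is adjacent to v
    refine ⟨x, hxm, hxadj, (hrep x v).mpr ⟨hxv, ?_⟩⟩
    rw [abs_le]
    constructor <;> linarith
  · -- x to the left of u : contradiction via y
    have hxney : x ≠ y := fun h => hxm (h ▸ hym)
    have hyx : G.Adj y x := by
      rw [hrep]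
      exact ⟨hxney.symm, by rw [abs_le]; constructor <;> linarith⟩
    exact absurd (hyall x hyx hxneu) hxm

end Aux

theorem stmt18 [Fintype V] (G : SimpleGraph V) (hG : G.Connected)
    (ℓ : V → ℝ) (hinj : Function.Injective ℓ)
    (hrep : ∀ u v, G.Adj u v ↔ u ≠ v ∧ |ℓ u - ℓ v| ≤ 1)
    (S : Set V) (hS : IsPDS G S) :
    ∀ k : ℕ, 1 ≤ k → ∀ v ∈ newObs G S k, ∃ u ∈ newObs G S (k - 1), G.Adj u v := by
  intro k hk v hv
  match k, hk, hv with
  | 1, _, hv =>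
    obtain ⟨h1, h0⟩ := hv
    rcases h1 with h | ⟨u, huS, hadj⟩
    · exact absurd h h0
    · exact ⟨u, huS, hadj⟩
  | (n+2), _, hv =>
    obtain ⟨h2, h1⟩ := hv
    rcases h2 with h | ⟨u, huO, huset⟩
    · exact absurd h h1
    · have huv : G.Adj u v := by
        have hmem : v ∈ G.neighborSet u \ obs G S (n+1) := by rw [huset]; exact rfl
        exact hmem.1
      by_cases hun : u ∈ obs G S n
      · -- hard case: u was already observed at round n; use the key lemma
        have hne : ℓ u ≠ ℓ v := fun h => ((hrep u v).mp huv).1 (hinj h)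
        have hx : ∃ x, x ∉ obs G S n ∧ G.Adj u x ∧ G.Adj x v := by
          rcases lt_or_gt_of_ne hne with h | h
          · exact key G ℓ hinj hrep S n u v hun h1 huv h
          · have hinj' : Function.Injective (fun w => -ℓ w) := fun a b hab =>
              hinj (neg_injective hab)
            have hrep' : ∀ a b, G.Adj a b ↔
                a ≠ b ∧ |(fun w => -ℓ w) a - (fun w => -ℓ w) b| ≤ 1 := by
              intro a b
              rw [hrep a b]
              simp only [neg_sub_neg, abs_sub_comm (ℓ b) (ℓ a)]
            exact key G (fun w => -ℓ w) hinj' hrep' S n u v hun h1 huv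
              (by show -ℓ u < -ℓ v; exact neg_lt_neg h)
        obtain ⟨x, hxn, hux, hxv⟩ := hx
        have hxO : x ∈ obs G S (n+1) := by
          by_contra hxO
          have hmem : x ∈ G.neighborSet u \ obs G S (n+1) := ⟨hux, hxO⟩
          rw [huset] at hmem
          exact ((hrep x v).mp hxv).1 hmem
        exact ⟨x, ⟨hxO, hxn⟩, hxv⟩
      · exact ⟨u, ⟨huO, hun⟩, huv⟩
end
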